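/- Let Q be a conjunctive query over schema σ and 𝒱 a finite set of views over σ such that the canonical candidate C(Q,𝒱) exists. Then Q(D) ⊆ C(Q,𝒱)(𝒱(D)) for every database D over σ. Consequently, C(Q,𝒱) is a 𝒱-rewriting of Q if and only if C(Q,𝒱)(𝒱(D)) ⊆ Q(D) for every database D over σ. -/

import Mathlib

/-- A relational atom (or fact): a relation symbol with a list of arguments.
Arguments are natural numbers, serving both as variables and as data values. -/
structure Atom where
  rel : ℕ
  args : List ℕ
deriving DecidableEq

/-- Apply a substitution to an atom. -/
def mapAtom (f : ℕ → ℕ) (A : Atom) : Atom := ⟨A.rel, A.args.map f⟩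

/-- The variables of an atom. -/
def Atom.vars (A : Atom) : Finset ℕ := A.args.toFinset

/-- The variables of a finite set of atoms. -/
def varsOf (B : Finset Atom) : Finset ℕ := B.biUnion Atom.vars

/-- A conjunctive query: a head atom and a finite set of body atoms. -/
structure CQ where
  head : Atom
  body : Finset Atom
deriving DecidableEq

/-- All variables of a conjunctive query. -/
def CQ.vars (Q : CQ) : Finset ℕ := Q.head.vars ∪ varsOf Q.body

/-- A schema: a set of relation symbols together with an arity function. -/
structure Schema where
  rels : Set ℕ
  ar : ℕ → ℕ

/-- An atom (or fact) over a schema. -/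
def atomOver (σ : Schema) (A : Atom) : Prop :=
  A.rel ∈ σ.rels ∧ A.args.length = σ.ar A.rel

/-- `Q` is a (well-formed) conjunctive query over schema `σ`:
nonempty body of σ-atoms, head relation symbol not in σ, and safety. -/
def isCQ (σ : Schema) (Q : CQ) : Prop :=
  Q.body.Nonempty ∧ (∀ A ∈ Q.body, atomOver σ A) ∧
  Q.head.rel ∉ σ.rels ∧ Q.head.vars ⊆ varsOf Q.body

/-- A database is a set of facts (finiteness is imposed where needed). -/
abbrev Database := Set Atom

/-- A database over a schema. -/
def isDBOver (σ : Schema) (D : Database) : Prop := ∀ F ∈ D, atomOver σ F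

/-- The result of a conjunctive query on a database. -/
def evalCQ (Q : CQ) (D : Database) : Set Atom :=
  { F | ∃ ν : ℕ → ℕ, (∀ A ∈ Q.body, mapAtom ν A ∈ D) ∧ mapAtom ν Q.head = F }

/-- Containment of conjunctive queries. -/
def containedCQ (Q1 Q2 : CQ) : Prop :=
  ∀ D : Database, D.Finite → evalCQ Q1 D ⊆ evalCQ Q2 D

/-- Equivalence of conjunctive queries. -/
def equivCQ (Q1 Q2 : CQ) : Prop :=
  ∀ D : Database, D.Finite → evalCQ Q1 D = evalCQ Q2 D

/-- A conjunctive query is minimal if no equivalent CQ has strictly fewer body atoms. -/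
def isMinimal (Q : CQ) : Prop :=
  ∀ Q2 : CQ, equivCQ Q Q2 → Q.body.card ≤ Q2.body.card

/-- A homomorphism from `Q2` to `Q1`. -/
def isHom (h : ℕ → ℕ) (Q2 Q1 : CQ) : Prop :=
  (∀ A ∈ Q2.body, mapAtom h A ∈ Q1.body) ∧ mapAtom h Q2.head = Q1.head

/-- A body homomorphism from `Q2` to `Q1`. -/
def isBodyHom (h : ℕ → ℕ) (Q2 Q1 : CQ) : Prop :=
  ∀ A ∈ Q2.body, mapAtom h A ∈ Q1.body

/-- A set of views over σ: each view is a CQ over σ and views have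
pairwise distinct head relation symbols. -/
def isViewSet (σ : Schema) (𝒱 : Finset CQ) : Prop :=
  (∀ V ∈ 𝒱, isCQ σ V) ∧
  ∀ V ∈ 𝒱, ∀ W ∈ 𝒱, V ≠ W → V.head.rel ≠ W.head.rel

/-- The 𝒱-defined database 𝒱(D). -/
def viewDB (𝒱 : Finset CQ) (D : Database) : Database :=
  ⋃ V ∈ 𝒱, evalCQ V D

/-- `Q'` is a CQ over the schema σ_𝒱 of the head relations of the views 𝒱. -/
def overViews (𝒱 : Finset CQ) (Q' : CQ) : Prop :=
  Q'.body.Nonempty ∧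
  (∀ A ∈ Q'.body, ∃ V ∈ 𝒱, A.rel = V.head.rel ∧ A.args.length = V.head.args.length) ∧
  (∀ V ∈ 𝒱, Q'.head.rel ≠ V.head.rel) ∧
  Q'.head.vars ⊆ varsOf Q'.body

/-- `Q'` is a 𝒱-rewriting of `Q`: `Q'` is over σ_𝒱 and `Q'(𝒱(D)) = Q(D)`
for every (finite) database `D` over σ. -/
def isRewriting (σ : Schema) (𝒱 : Finset CQ) (Q Q' : CQ) : Prop :=
  overViews 𝒱 Q' ∧
  ∀ D : Database, D.Finite → isDBOver σ D →
    evalCQ Q' (viewDB 𝒱 D) = evalCQ Q D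

/-- `T` is a join tree for the atom set `B`. -/
def joinTreeProp (B : Finset Atom) (T : SimpleGraph {A : Atom // A ∈ B}) : Prop :=
  T.IsTree ∧
  ∀ (x : ℕ) (A A' : {A : Atom // A ∈ B}) (p : T.Walk A A'), p.IsPath →
    x ∈ A.1.vars → x ∈ A'.1.vars → ∀ C ∈ p.support, x ∈ C.1.vars

/-- The atom set `B` has a join tree. -/
def hasJoinTree (B : Finset Atom) : Prop :=
  ∃ T : SimpleGraph {A : Atom // A ∈ B}, joinTreeProp B T

/-- A conjunctive query is acyclic if its body has a join tree. -/
def isAcyclicCQ (Q : CQ) : Prop := hasJoinTree Q.body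

/-- A conjunctive query is free-connex acyclic. -/
def isFreeConnex (Q : CQ) : Prop :=
  isAcyclicCQ Q ∧ hasJoinTree (insert Q.head Q.body)

/-- The bridge variables of `𝒜 ⊆ body(Q)`. -/
def bvars (Q : CQ) (𝒜 : Finset Atom) : Finset ℕ :=
  varsOf 𝒜 ∩ (Q.head.vars ∪ varsOf (Q.body \ 𝒜))

/-- An application of a view `V`: a substitution that does not unify any
quantified variable of `V` with another variable of `V`. -/
def isApplication (V : CQ) (α : ℕ → ℕ) : Prop :=
  ∀ x ∈ varsOf V.body, x ∉ V.head.vars →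
    ∀ y ∈ CQ.vars V, y ≠ x → α x ≠ α y

/-- The query α(V). -/
def applyCQ (α : ℕ → ℕ) (V : CQ) : CQ :=
  ⟨mapAtom α V.head, V.body.image (mapAtom α)⟩

/-- `(𝒜, V, α, ψ)` is a cover description for `Q`. -/
def isCoverDesc (Q : CQ) (𝒜 : Finset Atom) (V : CQ) (α ψ : ℕ → ℕ) : Prop :=
  𝒜 ⊆ Q.body ∧ isApplication V α ∧
  𝒜 ⊆ V.body.image (mapAtom α) ∧
  bvars Q 𝒜 ⊆ V.head.vars.image α ∧
  isBodyHom ψ (applyCQ α V) Q ∧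
  ∀ x ∈ varsOf 𝒜, ψ x = x

/-- A cover partition for `Q` over `𝒱`: a collection of cover descriptions
whose atom sets partition `body(Q)`. -/
def isCoverPartition (Q : CQ) (𝒱 : Finset CQ) (m : ℕ)
    (𝒜 : Fin m → Finset Atom) (V : Fin m → CQ) (α ψ : Fin m → ℕ → ℕ) : Prop :=
  (∀ i, V i ∈ 𝒱 ∧ isCoverDesc Q (𝒜 i) (V i) (α i) (ψ i)) ∧
  ∀ A ∈ Q.body, ∃! i, A ∈ 𝒜 i

/-- Consistency of a cover partition: a variable of any `α_j(V_j)` lies in the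
range of another `α_i` only if it also lies in `bvars(𝒜_j)`. -/
def isConsistent (Q : CQ) (m : ℕ) (𝒜 : Fin m → Finset Atom) (V : Fin m → CQ)
    (α : Fin m → ℕ → ℕ) : Prop :=
  ∀ i j : Fin m, i ≠ j → ∀ z ∈ CQ.vars (applyCQ (α j) (V j)),
    (∃ x ∈ CQ.vars (V i), α i x = z) → z ∈ bvars Q (𝒜 j)

/-- The query `Q_𝒞` induced by a (consistent) cover partition. -/
def inducedCQ (Q : CQ) (m : ℕ) (V : Fin m → CQ) (α : Fin m → ℕ → ℕ) : CQ :=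
  ⟨Q.head, Finset.image (fun i => mapAtom (α i) (V i).head) Finset.univ⟩

/-- Quantified variable disjointness for a family of view applications. -/
def QVD (m : ℕ) (V : Fin m → CQ) (α : Fin m → ℕ → ℕ) : Prop :=
  ∀ i j : Fin m, i ≠ j → ∀ x ∈ varsOf (V i).body, x ∉ (V i).head.vars →
    ∀ y ∈ CQ.vars (V j), α i x ≠ α j y

/-- `QE` is an expansion of `Q'` with respect to the views `𝒱`. -/
def isExpansion (𝒱 : Finset CQ) (Q' QE : CQ) : Prop :=
  ∃ (m : ℕ) (A' : Fin m → Atom) (V : Fin m → CQ) (α : Fin m → ℕ → ℕ),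
    (∀ i, V i ∈ 𝒱 ∧ isApplication (V i) (α i) ∧ A' i = mapAtom (α i) (V i).head) ∧
    Q'.body = Finset.image A' Finset.univ ∧
    QVD m V α ∧
    QE.head = Q'.head ∧
    QE.body = Finset.biUnion Finset.univ (fun i => (V i).body.image (mapAtom (α i)))

/-- `atoms(x)`: the body atoms of `Q` containing the variable `x`. -/
def atomsWith (Q : CQ) (x : ℕ) : Finset Atom :=
  Q.body.filter (fun A => x ∈ A.vars)

/-- Hierarchical conjunctive queries. -/
def isHierarchical (Q : CQ) : Prop :=
  ∀ x y : ℕ, atomsWith Q x ⊆ atomsWith Q y ∨ atomsWith Q y ⊆ atomsWith Q x ∨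
    atomsWith Q x ∩ atomsWith Q y = ∅

/-- q-hierarchical conjunctive queries. -/
def isQHierarchical (Q : CQ) : Prop :=
  isHierarchical Q ∧ ∀ x y : ℕ, atomsWith Q x ⊂ atomsWith Q y →
    x ∈ Q.head.vars → y ∈ Q.head.vars

/-- `P` is a partition of `body(Q)` witnessing weak head arity at most `k`. -/
def witnessesWHA (Q : CQ) (k n : ℕ) (P : Fin n → Finset Atom) : Prop :=
  (∀ i, (P i).Nonempty) ∧ (∀ i, P i ⊆ Q.body) ∧ (∀ A ∈ Q.body, ∃! i, A ∈ P i) ∧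
  (∀ i, (varsOf (P i) ∩ Q.head.vars).card ≤ k) ∧
  (∀ i j, i ≠ j → ∀ x ∈ varsOf (P i), x ∈ varsOf (P j) → x ∈ Q.head.vars)

/-- `Q` has weak head arity at most `k`. -/
def hasWHAle (Q : CQ) (k : ℕ) : Prop := ∃ n P, witnessesWHA Q k n P

/-- The weak head arity of `Q`. -/
noncomputable def weakHeadArity (Q : CQ) : ℕ := sInf {k | hasWHAle Q k}

/-- The cover graph of `Q`: vertices are the body atoms, with an edge between
two atoms iff they share a variable not occurring in the head. -/
def coverGraph (Q : CQ) : SimpleGraph {A : Atom // A ∈ Q.body} :=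
  SimpleGraph.fromRel (fun A B => ∃ x, x ∈ A.1.vars ∧ x ∈ B.1.vars ∧ x ∉ Q.head.vars)

/-- A subset `s` of the atom set `B` is connected in the (join) tree `T`. -/
def connectedIn (B : Finset Atom) (T : SimpleGraph {A : Atom // A ∈ B}) (s : Finset Atom) : Prop :=
  (T.induce {A : {A : Atom // A ∈ B} | A.1 ∈ s}).Connected

/-! Every valuation `ν` witnessing `F ∈ Q(D)` is a homomorphism from the canonical database
`C(Q)` into `D`. View evaluation is preserved by homomorphisms, so `ν` also maps
`𝒱(C(Q))`, the body of the canonical candidate, into `𝒱(D)` and thereby witnesses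
`F ∈ C(Q,𝒱)(𝒱(D))`. Hence a 𝒱-rewriting only needs the reverse containment. -/

theorem mapAtom_mapAtom (f g : ℕ → ℕ) (A : Atom) :
    mapAtom f (mapAtom g A) = mapAtom (f ∘ g) A := by
  simp [mapAtom, List.map_map]

theorem mapAtom_mem_evalCQ {Q : CQ} {D D' : Database} {ν : ℕ → ℕ}
    (hν : ∀ G ∈ D, mapAtom ν G ∈ D') {F : Atom} (hF : F ∈ evalCQ Q D) :
    mapAtom ν F ∈ evalCQ Q D' := by
  obtain ⟨μ, hμ, rfl⟩ := hF
  exact ⟨ν ∘ μ, fun A hA => mapAtom_mapAtom ν μ A ▸ hν _ (hμ A hA),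
    (mapAtom_mapAtom ν μ _).symm⟩

theorem mapAtom_mem_viewDB {𝒱 : Finset CQ} {D D' : Database} {ν : ℕ → ℕ}
    (hν : ∀ G ∈ D, mapAtom ν G ∈ D') {F : Atom} (hF : F ∈ viewDB 𝒱 D) :
    mapAtom ν F ∈ viewDB 𝒱 D' := by
  simp only [viewDB, Set.mem_iUnion] at hF ⊢
  obtain ⟨V, hV, hFV⟩ := hF
  exact ⟨V, hV, mapAtom_mem_evalCQ hν hFV⟩

theorem evalCQ_subset_evalCQ_viewDB {𝒱 : Finset CQ} {Q : CQ} {B : Finset Atom}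
    (hB : (B : Set Atom) = viewDB 𝒱 (Q.body : Set Atom)) (D : Database) :
    evalCQ Q D ⊆ evalCQ ⟨Q.head, B⟩ (viewDB 𝒱 D) := by
  rintro _ ⟨ν, hν, rfl⟩
  refine ⟨ν, fun A hA => mapAtom_mem_viewDB hν ?_, rfl⟩
  rw [← hB]
  exact hA

theorem exists_view_of_mem_viewDB {𝒱 : Finset CQ} {D : Database} {A : Atom}
    (hA : A ∈ viewDB 𝒱 D) :
    ∃ V ∈ 𝒱, A.rel = V.head.rel ∧ A.args.length = V.head.args.length := by
  simp only [viewDB, Set.mem_iUnion] at hA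
  obtain ⟨V, hV, μ, -, rfl⟩ := hA
  exact ⟨V, hV, rfl, List.length_map _⟩

theorem overViews_of_subset_viewDB {𝒱 : Finset CQ} {D : Database} {H : Atom}
    {B : Finset Atom} (hB : (B : Set Atom) ⊆ viewDB 𝒱 D) (hne : B.Nonempty)
    (hfresh : ∀ V ∈ 𝒱, H.rel ≠ V.head.rel) (hvars : H.vars ⊆ varsOf B) :
    overViews 𝒱 ⟨H, B⟩ :=
  ⟨hne, fun _ hA => exists_view_of_mem_viewDB (hB hA), hfresh, hvars⟩

theorem statement14_general (σ : Schema) (𝒱 : Finset CQ)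
    (Q : CQ) (hfresh : ∀ V ∈ 𝒱, Q.head.rel ≠ V.head.rel)
    (B : Finset Atom) (hB : (B : Set Atom) = viewDB 𝒱 (Q.body : Set Atom))
    (hne : B.Nonempty) (hvars : Q.head.vars ⊆ varsOf B) :
    (∀ D : Database, D.Finite → isDBOver σ D →
      evalCQ Q D ⊆ evalCQ (CQ.mk Q.head B) (viewDB 𝒱 D)) ∧
    (isRewriting σ 𝒱 Q (CQ.mk Q.head B) ↔
      ∀ D : Database, D.Finite → isDBOver σ D →
        evalCQ (CQ.mk Q.head B) (viewDB 𝒱 D) ⊆ evalCQ Q D) := by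
  have hsub := evalCQ_subset_evalCQ_viewDB hB
  refine ⟨fun D _ _ => hsub D, fun ⟨_, heq⟩ D hfin hD => (heq D hfin hD).subset,
    fun hsup => ⟨overViews_of_subset_viewDB hB.subset hne hfresh hvars,
      fun D hfin hD => (hsup D hfin hD).antisymm (hsub D)⟩⟩

/-- Suppose the canonical candidate `C(Q,𝒱)` exists, i.e., the body
`B = 𝒱(C(Q))` (the views evaluated on the canonical database `body(Q)`) is nonempty
and contains all head variables of `Q`. Then `Q(D) ⊆ C(Q,𝒱)(𝒱(D))` for every
database `D` over `σ`; consequently, `C(Q,𝒱)` is a 𝒱-rewriting of `Q` iff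
`C(Q,𝒱)(𝒱(D)) ⊆ Q(D)` for every database `D` over `σ`. -/
theorem statement14 (σ : Schema) (𝒱 : Finset CQ) (h𝒱 : isViewSet σ 𝒱)
    (Q : CQ) (hQ : isCQ σ Q) (hfresh : ∀ V ∈ 𝒱, Q.head.rel ≠ V.head.rel)
    (B : Finset Atom) (hB : (B : Set Atom) = viewDB 𝒱 (Q.body : Set Atom))
    (hne : B.Nonempty) (hvars : Q.head.vars ⊆ varsOf B) :
    (∀ D : Database, D.Finite → isDBOver σ D →
      evalCQ Q D ⊆ evalCQ (CQ.mk Q.head B) (viewDB 𝒱 D)) ∧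
    (isRewriting σ 𝒱 Q (CQ.mk Q.head B) ↔
      ∀ D : Database, D.Finite → isDBOver σ D →
        evalCQ (CQ.mk Q.head B) (viewDB 𝒱 D) ⊆ evalCQ Q D) :=
  statement14_general σ 𝒱 Q hfresh B hB hne hvars
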